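/- If k and N satisfy 3R²kN|b| < 1 with R = ‖U‖_{L²}, then the implicit midpoint system Y = U + k b F((Y+U)/2) on S_N has at most one solution Y with ‖Y‖ = ‖U‖, where F(u) = −i(−∂ₓₓ)^s u + i P_N(|u|²u). -/

import Mathlib

/-!
On Fourier coefficients the scheme reads `y_l = u_l + kb (-i |l|^{2s} m_l + i ĝ(m)_l)`, where
`m = (Y + U)/2` and `ĝ(m)` are the coefficients of `|m|²m`. Subtracting two solutions, the
dispersive term is skew and only enlarges the factor in front of `y₁ - y₂`, so
`‖Y₁ - Y₂‖ ≤ k|b| ‖P_N(|m₁|²m₁ - |m₂|²m₂)‖`. Both midpoints lie in the `L²`-ball of radius `R`,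
hence `|m|_∞² ≤ (2N+1) R²/(2π)` by Cauchy–Schwarz on the coefficients; the pointwise Lipschitz
bound for `|u|²u` and Bessel's inequality then give `‖Y₁ - Y₂‖ ≤ θ ‖Y₁ - Y₂‖` with
`θ = (3/2) k|b| (2N+1) R²/(2π) ≤ 3R²kN|b| < 1`.

For `N = 0` the step condition is void: the scheme is the scalar equation
`m (2 - i kb |m|²) = 2u`, and `t = |m|²` solves `t (4 + k²b²t²) = 4|u|²`, whose left side is
strictly increasing in `t ≥ 0`; so `t`, and then `m`, is determined by `u`.
-/

open Real

/-- The trigonometric polynomial of degree ≤ N with coefficients `c`. -/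
noncomputable def trig (N : ℕ) (c : ℤ → ℂ) : ℝ → ℂ :=
  fun x => ∑ j ∈ Finset.Icc (-(N:ℤ)) (N:ℤ),
    c j * Complex.exp (Complex.I * (j:ℂ) * (x:ℂ))

/-- The Fourier–Galerkin vector field `F(u) = −i(−∂ₓₓ)ˢu + i P_N(|u|²u)`
on `S_N`, applied to the trigonometric polynomial with coefficients `c`. -/
noncomputable def Fmap (s : ℝ) (N : ℕ) (c : ℤ → ℂ) : ℝ → ℂ :=
  fun x =>
    -Complex.I * (∑ j ∈ Finset.Icc (-(N:ℤ)) (N:ℤ),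
        ((|(j:ℝ)| ^ (2*s) : ℝ) : ℂ) * c j * Complex.exp (Complex.I * (j:ℂ) * (x:ℂ)))
    + Complex.I * (∑ j ∈ Finset.Icc (-(N:ℤ)) (N:ℤ),
        (((1/(2*π) : ℝ) : ℂ) *
          ∫ y in (-π)..π, (‖trig N c y‖ : ℂ)^2 * trig N c y *
            Complex.exp (-Complex.I * (j:ℂ) * (y:ℂ)))
        * Complex.exp (Complex.I * (j:ℂ) * (x:ℂ)))

noncomputable def expSum (S : Finset ℤ) (c : ℤ → ℂ) (x : ℝ) : ℂ :=
  ∑ j ∈ S, c j * Complex.exp (Complex.I * (j:ℂ) * (x:ℂ))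

noncomputable def fourierCoeffPi (H : ℝ → ℂ) (j : ℤ) : ℂ :=
  ((1/(2*π) : ℝ) : ℂ) * ∫ y in (-π)..π, H y * Complex.exp (-Complex.I * (j:ℂ) * (y:ℂ))

noncomputable def cubic (z : ℂ) : ℂ := (‖z‖ : ℂ)^2 * z

lemma two_pi_mul_one_div : ((2*π:ℝ):ℂ) * ((1/(2*π):ℝ):ℂ) = 1 := by
  rw [← Complex.ofReal_mul, mul_one_div_cancel (by positivity), Complex.ofReal_one]

lemma continuous_expSum (S : Finset ℤ) (c : ℤ → ℂ) : Continuous (expSum S c) :=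
  continuous_finsetSum _ fun _ _ => by fun_prop

@[fun_prop]
lemma continuous_cubic : Continuous cubic := by
  unfold cubic; fun_prop

lemma integral_exp_int_mul (n : ℤ) :
    ∫ x in (-π)..π, Complex.exp (Complex.I * (n:ℂ) * (x:ℂ)) = if n = 0 then ((2*π:ℝ):ℂ) else 0 := by
  rcases eq_or_ne n 0 with rfl | hn
  · simp; ring
  rw [if_neg hn, integral_exp_mul_complex (by simp [hn])]
  have hper : Complex.exp (Complex.I * n * π) = Complex.exp (Complex.I * n * ((-π:ℝ):ℂ)) :=
    Complex.exp_eq_exp_iff_exists_int.mpr ⟨n, by push_cast; ring⟩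
  simp [hper]

lemma integral_expSum_mul_exp_neg (S : Finset ℤ) (c : ℤ → ℂ) (l : ℤ) :
    ∫ x in (-π)..π, expSum S c x * Complex.exp (-Complex.I * (l:ℂ) * (x:ℂ))
      = if l ∈ S then (2*π:ℝ) * c l else 0 := by
  have hmodes : ∀ x : ℝ, expSum S c x * Complex.exp (-Complex.I * (l:ℂ) * (x:ℂ))
      = ∑ j ∈ S, c j * Complex.exp (Complex.I * ((j - l : ℤ):ℂ) * (x:ℂ)) := by
    intro x
    rw [expSum, Finset.sum_mul]
    refine Finset.sum_congr rfl fun j _ => ?_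
    rw [mul_assoc, ← Complex.exp_add]
    push_cast; ring_nf
  simp_rw [hmodes]
  rw [intervalIntegral.integral_finsetSum fun j _ => (by fun_prop : Continuous fun x : ℝ =>
    c j * Complex.exp (Complex.I * ((j - l : ℤ):ℂ) * (x:ℂ))).intervalIntegrable _ _]
  simp_rw [intervalIntegral.integral_const_mul, integral_exp_int_mul, sub_eq_zero, mul_ite,
    mul_zero]
  rw [Finset.sum_ite_eq', mul_comm]

lemma fourierCoeffPi_expSum (S : Finset ℤ) (c : ℤ → ℂ) {l : ℤ} (hl : l ∈ S) :
    fourierCoeffPi (expSum S c) l = c l := by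
  rw [fourierCoeffPi, integral_expSum_mul_exp_neg, if_pos hl]
  linear_combination c l * (mul_comm _ _).trans two_pi_mul_one_div

lemma eq_of_expSum_eq {S : Finset ℤ} {c d : ℤ → ℂ} (h : ∀ x, expSum S c x = expSum S d x) :
    ∀ l ∈ S, c l = d l := fun l hl => by
  rw [← fourierCoeffPi_expSum S c hl, ← fourierCoeffPi_expSum S d hl, funext h]

lemma fourierCoeffPi_sub {H₁ H₂ : ℝ → ℂ} (h₁ : Continuous H₁) (h₂ : Continuous H₂) (l : ℤ) :
    fourierCoeffPi (H₁ - H₂) l = fourierCoeffPi H₁ l - fourierCoeffPi H₂ l := by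
  simp only [fourierCoeffPi, Pi.sub_apply, sub_mul, ← mul_sub]
  exact congrArg _ (intervalIntegral.integral_sub ((h₁.mul (by fun_prop)).intervalIntegrable _ _)
    ((h₂.mul (by fun_prop)).intervalIntegrable _ _))

lemma integral_mul_conj_expSum (S : Finset ℤ) (c : ℤ → ℂ) {H : ℝ → ℂ} (hH : Continuous H) :
    ∫ x in (-π)..π, H x * starRingEnd ℂ (expSum S c x)
      = (2*π:ℝ) * ∑ j ∈ S, starRingEnd ℂ (c j) * fourierCoeffPi H j := by
  have hconj : ∀ x : ℝ, H x * starRingEnd ℂ (expSum S c x)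
      = ∑ j ∈ S, starRingEnd ℂ (c j) * (H x * Complex.exp (-Complex.I * (j:ℂ) * (x:ℂ))) := by
    intro x
    simp only [expSum, map_sum, map_mul, ← Complex.exp_conj, Finset.mul_sum]
    refine Finset.sum_congr rfl fun j _ => ?_
    simp only [Complex.conj_I, Complex.conj_ofReal, map_intCast]
    ring_nf
  simp_rw [hconj]
  rw [intervalIntegral.integral_finsetSum fun j _ => (by fun_prop : Continuous fun x : ℝ =>
    starRingEnd ℂ (c j) * (H x * Complex.exp (-Complex.I * (j:ℂ) * (x:ℂ)))).intervalIntegrable _ _,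
    Finset.mul_sum]
  refine Finset.sum_congr rfl fun j _ => ?_
  rw [intervalIntegral.integral_const_mul, fourierCoeffPi]
  linear_combination (-(starRingEnd ℂ (c j)) *
    ∫ y in (-π)..π, H y * Complex.exp (-Complex.I * (j:ℂ) * (y:ℂ))) * two_pi_mul_one_div

lemma integral_norm_sq_expSum (S : Finset ℤ) (c : ℤ → ℂ) :
    ∫ x in (-π)..π, ‖expSum S c x‖^2 = 2*π * ∑ j ∈ S, ‖c j‖^2 := by
  apply Complex.ofReal_injective
  rw [← intervalIntegral.integral_ofReal]
  simp_rw [Complex.ofReal_pow, ← Complex.mul_conj']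
  rw [integral_mul_conj_expSum S c (continuous_expSum S c)]
  push_cast
  congr 1
  refine Finset.sum_congr rfl fun j hj => ?_
  rw [fourierCoeffPi_expSum S c hj, Complex.conj_mul']

lemma sum_norm_sq_fourierCoeffPi_le (S : Finset ℤ) {H : ℝ → ℂ} (hH : Continuous H) :
    2*π * ∑ l ∈ S, ‖fourierCoeffPi H l‖^2 ≤ ∫ x in (-π)..π, ‖H x‖^2 := by
  set P := expSum S (fourierCoeffPi H)
  have hP : Continuous P := continuous_expSum S _
  have hcross : ∫ x in (-π)..π, (H x * starRingEnd ℂ (P x)).re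
      = 2*π * ∑ l ∈ S, ‖fourierCoeffPi H l‖^2 := by
    have hint : IntervalIntegrable (fun x => H x * starRingEnd ℂ (P x)) MeasureTheory.volume
        (-π) π :=
      Continuous.intervalIntegrable (by fun_prop) _ _
    have hre := Complex.reCLM.intervalIntegral_comp_comm hint
    simp only [Complex.reCLM_apply] at hre
    rw [hre, integral_mul_conj_expSum S _ hH]
    simp_rw [Complex.conj_mul']
    norm_cast
  have hexpand : ∀ x, ‖H x - P x‖^2 = ‖H x‖^2 - 2 * (H x * starRingEnd ℂ (P x)).re + ‖P x‖^2 := by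
    intro x
    simp only [Complex.sq_norm, Complex.normSq_sub]
    ring
  have hnonneg : 0 ≤ ∫ x in (-π)..π, ‖H x - P x‖^2 :=
    intervalIntegral.integral_nonneg (by linarith [pi_pos]) fun x _ => by positivity
  simp_rw [hexpand] at hnonneg
  rw [intervalIntegral.integral_add, intervalIntegral.integral_sub,
    intervalIntegral.integral_const_mul, hcross, integral_norm_sq_expSum] at hnonneg
  all_goals first
    | linarith
    | exact Continuous.intervalIntegrable (by fun_prop) _ _

lemma norm_sq_expSum_le (S : Finset ℤ) (c : ℤ → ℂ) (x : ℝ) :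
    ‖expSum S c x‖^2 ≤ S.card * ∑ j ∈ S, ‖c j‖^2 := by
  have hsum : ‖expSum S c x‖ ≤ ∑ j ∈ S, ‖c j‖ := by
    refine (norm_sum_le _ _).trans (Finset.sum_le_sum fun j _ => ?_)
    rw [norm_mul, Complex.norm_exp]
    simp [Complex.mul_re]
  exact (pow_le_pow_left₀ (norm_nonneg _) hsum 2).trans sq_sum_le_card_mul_sum_sq

lemma norm_cubic_sub_cubic_le {z w : ℂ} {M : ℝ} (hz : ‖z‖ ≤ M) (hw : ‖w‖ ≤ M) :
    ‖cubic z - cubic w‖ ≤ 3*M^2 * ‖z - w‖ := by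
  have hsplit : cubic z - cubic w
      = z^2 * starRingEnd ℂ (z - w) + (z + w) * starRingEnd ℂ w * (z - w) := by
    simp only [cubic, ← Complex.mul_conj', map_sub]; ring
  have hzw : ‖z + w‖ ≤ 2*M := (norm_add_le z w).trans (by linarith)
  have hM : 0 ≤ M := (norm_nonneg z).trans hz
  rw [hsplit]
  refine (norm_add_le _ _).trans ?_
  simp only [norm_mul, norm_pow, RCLike.norm_conj]
  have hz2 : ‖z‖^2 ≤ M^2 := pow_le_pow_left₀ (norm_nonneg z) hz 2
  have hzww : ‖z + w‖ * ‖w‖ ≤ 2*M * M := mul_le_mul hzw hw (norm_nonneg w) (by linarith)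
  nlinarith [norm_nonneg (z - w)]

lemma integral_norm_sq_cubic_sub_le {f g : ℝ → ℂ} (hf : Continuous f) (hg : Continuous g)
    {M : ℝ} (hfM : ∀ x, ‖f x‖ ≤ M) (hgM : ∀ x, ‖g x‖ ≤ M) {a b : ℝ} (hab : a ≤ b) :
    ∫ x in a..b, ‖cubic (f x) - cubic (g x)‖^2 ≤ (3*M^2)^2 * ∫ x in a..b, ‖f x - g x‖^2 := by
  rw [← intervalIntegral.integral_const_mul]
  refine intervalIntegral.integral_mono_on hab
    (Continuous.intervalIntegrable (by fun_prop [continuous_cubic]) _ _)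
    (Continuous.intervalIntegrable (by fun_prop) _ _) fun x _ => ?_
  rw [← mul_pow]
  exact pow_le_pow_left₀ (norm_nonneg _) (norm_cubic_sub_cubic_le (hfM x) (hgM x)) 2

lemma Fmap_eq_expSum (s : ℝ) (N : ℕ) (c : ℤ → ℂ) (x : ℝ) :
    Fmap s N c x = expSum (Finset.Icc (-(N:ℤ)) N) (fun j =>
      -Complex.I * ((|(j:ℝ)|^(2*s) : ℝ) : ℂ) * c j
        + Complex.I * fourierCoeffPi (fun y => cubic (trig N c y)) j) x := by
  simp only [Fmap, expSum, fourierCoeffPi, cubic, Finset.mul_sum, ← Finset.sum_add_distrib]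
  exact Finset.sum_congr rfl fun j _ => by ring

lemma coeff_eq_of_trig_eq {s k b : ℝ} {N : ℕ} {uc y m : ℤ → ℂ}
    (h : ∀ x, trig N y x = trig N uc x + ((k*b : ℝ) : ℂ) * Fmap s N m x) :
    ∀ l ∈ Finset.Icc (-(N:ℤ)) N, y l = uc l + ((k*b : ℝ) : ℂ) *
      (-Complex.I * ((|(l:ℝ)|^(2*s) : ℝ) : ℂ) * m l
        + Complex.I * fourierCoeffPi (fun y => cubic (trig N m y)) l) := by
  refine eq_of_expSum_eq fun x => ?_
  rw [show expSum _ y x = trig N y x from rfl, h x, Fmap_eq_expSum]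
  simp only [trig, expSum, Finset.mul_sum, ← Finset.sum_add_distrib]
  exact Finset.sum_congr rfl fun j _ => by ring

lemma sum_norm_sq_eq_of_sqrt_integral_eq {N : ℕ} {c : ℤ → ℂ} {R : ℝ}
    (h : Real.sqrt (∫ x in (-π)..π, ‖trig N c x‖^2) = R) :
    ∑ j ∈ Finset.Icc (-(N:ℤ)) N, ‖c j‖^2 = R^2 / (2*π) := by
  have hnonneg : 0 ≤ ∫ x in (-π)..π, ‖trig N c x‖^2 :=
    intervalIntegral.integral_nonneg (by linarith [pi_pos]) fun x _ => by positivity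
  rw [← h, Real.sq_sqrt hnonneg, show trig N c = expSum _ c from rfl, integral_norm_sq_expSum]
  field_simp

lemma sum_norm_sq_midpoint_le (S : Finset ℤ) (y u : ℤ → ℂ) :
    ∑ j ∈ S, ‖(y j + u j)/2‖^2 ≤ (∑ j ∈ S, ‖y j‖^2 + ∑ j ∈ S, ‖u j‖^2) / 2 := by
  rw [← Finset.sum_add_distrib, Finset.sum_div]
  refine Finset.sum_le_sum fun j _ => ?_
  rw [norm_div, Complex.norm_ofNat]
  nlinarith [norm_add_le (y j) (u j), norm_nonneg (y j + u j), sq_nonneg (‖y j‖ - ‖u j‖)]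

lemma norm_sub_le_of_midpoint_eq {u y₁ y₂ g₁ g₂ : ℂ} {c a : ℝ}
    (h₁ : y₁ = u + c * (-Complex.I * a * ((y₁ + u)/2) + Complex.I * g₁))
    (h₂ : y₂ = u + c * (-Complex.I * a * ((y₂ + u)/2) + Complex.I * g₂)) :
    ‖y₁ - y₂‖ ≤ |c| * ‖g₁ - g₂‖ := by
  have hlin : (y₁ - y₂) * (1 + ((c*a/2 : ℝ) : ℂ) * Complex.I) = Complex.I * c * (g₁ - g₂) := by
    push_cast
    linear_combination h₁ - h₂
  have hge : 1 ≤ ‖1 + ((c*a/2 : ℝ) : ℂ) * Complex.I‖ := by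
    simpa using Complex.abs_re_le_norm (1 + ((c*a/2 : ℝ) : ℂ) * Complex.I)
  calc ‖y₁ - y₂‖ ≤ ‖y₁ - y₂‖ * ‖1 + ((c*a/2 : ℝ) : ℂ) * Complex.I‖ :=
        le_mul_of_one_le_right (norm_nonneg _) hge
    _ = |c| * ‖g₁ - g₂‖ := by rw [← norm_mul, hlin]; simp

lemma eq_of_cubic_midpoint_eq {u y₁ y₂ : ℂ} {c : ℝ}
    (h₁ : y₁ = u + c * (Complex.I * cubic ((y₁ + u)/2)))
    (h₂ : y₂ = u + c * (Complex.I * cubic ((y₂ + u)/2))) : y₁ = y₂ := by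
  have hfactor : ∀ y, y = u + c * (Complex.I * cubic ((y + u)/2)) →
      (y + u)/2 * (2 - c * Complex.I * ((‖(y + u)/2‖^2 : ℝ) : ℂ)) = 2 * u := by
    intro y hy
    rw [cubic] at hy
    push_cast
    linear_combination hy
  have hcubic : ∀ y, y = u + c * (Complex.I * cubic ((y + u)/2)) →
      ‖(y + u)/2‖^2 * (4 + c^2 * (‖(y + u)/2‖^2)^2) = 4 * ‖u‖^2 := by
    intro y hy
    have hfac : ∀ t : ℝ, ‖2 - c * Complex.I * (t : ℂ)‖^2 = 4 + c^2 * t^2 := fun t => by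
      rw [Complex.sq_norm, Complex.normSq_apply]
      simp
      ring
    have hn := congrArg (‖·‖^2) (hfactor y hy)
    simp only [norm_mul, mul_pow, Complex.norm_ofNat, hfac] at hn
    linear_combination hn
  have k₁ := hfactor y₁ h₁
  have k₂ := hfactor y₂ h₂
  have q₁ := hcubic y₁ h₁
  have q₂ := hcubic y₂ h₂
  set t₁ := ‖(y₁ + u)/2‖^2
  set t₂ := ‖(y₂ + u)/2‖^2
  have ht : t₁ = t₂ := by
    have hprod : (t₁ - t₂) * (4 + c^2 * (t₁^2 + t₁*t₂ + t₂^2)) = 0 := by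
      linear_combination q₁ - q₂
    have hpos : 0 < 4 + c^2 * (t₁^2 + t₁*t₂ + t₂^2) := by positivity
    linarith [(mul_eq_zero.mp hprod).resolve_right hpos.ne']
  have hne : (2 - c * Complex.I * (t₁ : ℂ)) ≠ 0 := fun h => by
    simpa using congrArg Complex.re h
  have hmid : (y₁ + u)/2 = (y₂ + u)/2 :=
    mul_right_cancel₀ hne (k₁.trans (ht ▸ k₂).symm)
  linear_combination 2 * hmid

def IsMidpointStep (s k b : ℝ) (N : ℕ) (uc y : ℤ → ℂ) : Prop :=
  ∀ x, trig N y x = trig N uc x + ((k*b : ℝ) : ℂ) * Fmap s N (fun j => (y j + uc j)/2) x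

lemma trig_zero (c : ℤ → ℂ) (x : ℝ) : trig 0 c x = c 0 := by simp [trig]

lemma fourierCoeffPi_const (z : ℂ) : fourierCoeffPi (fun _ => z) 0 = z := by
  have hconst : (fun _ : ℝ => z) = expSum {0} (fun _ => z) := by funext x; simp [expSum]
  rw [hconst, fourierCoeffPi_expSum _ _ (Finset.mem_singleton_self 0)]

lemma trig_eq_of_degree_zero {s k b : ℝ} (hs : 0 < s) {uc y₁ y₂ : ℤ → ℂ}
    (h₁ : IsMidpointStep s k b 0 uc y₁) (h₂ : IsMidpointStep s k b 0 uc y₂) :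
    ∀ x, trig 0 y₁ x = trig 0 y₂ x := by
  have hscalar : ∀ y : ℤ → ℂ, IsMidpointStep s k b 0 uc y →
      y 0 = uc 0 + ((k*b : ℝ) : ℂ) * (Complex.I * cubic ((y 0 + uc 0)/2)) := by
    intro y h
    have h0 := coeff_eq_of_trig_eq h 0 (by simp)
    simp_rw [trig_zero, fourierCoeffPi_const] at h0
    -- `Real.rpow` has `0 ^ 0 = 1`, so `|0| ^ (2*s) = 0` needs `2*s ≠ 0`.
    simpa [Real.zero_rpow (by positivity : 2*s ≠ 0)] using h0
  intro x
  rw [trig_zero, trig_zero]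
  exact eq_of_cubic_midpoint_eq (hscalar y₁ h₁) (hscalar y₂ h₂)

lemma sum_norm_sq_fourierCoeffPi_cubic_sub_le (N : ℕ) {m₁ m₂ : ℤ → ℂ} {Q : ℝ}
    (hm₁ : ∑ j ∈ Finset.Icc (-(N:ℤ)) N, ‖m₁ j‖^2 ≤ Q)
    (hm₂ : ∑ j ∈ Finset.Icc (-(N:ℤ)) N, ‖m₂ j‖^2 ≤ Q) :
    ∑ l ∈ Finset.Icc (-(N:ℤ)) N, ‖fourierCoeffPi (fun y => cubic (trig N m₁ y)) l
        - fourierCoeffPi (fun y => cubic (trig N m₂ y)) l‖^2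
      ≤ (3 * ((Finset.Icc (-(N:ℤ)) N).card * Q))^2
        * ∑ j ∈ Finset.Icc (-(N:ℤ)) N, ‖m₁ j - m₂ j‖^2 := by
  set T := Finset.Icc (-(N:ℤ)) N
  have hsup : ∀ m : ℤ → ℂ, ∑ j ∈ T, ‖m j‖^2 ≤ Q → ∀ x, ‖trig N m x‖ ≤ √(T.card * Q) :=
    fun m hm x => Real.le_sqrt_of_sq_le ((norm_sq_expSum_le T m x).trans (by gcongr))
  have hcont : ∀ m, Continuous (trig N m) := fun m => continuous_expSum T m
  have hsub : ∀ x, trig N m₁ x - trig N m₂ x = expSum T (fun j => m₁ j - m₂ j) x := fun x => by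
    simp only [trig, expSum, ← Finset.sum_sub_distrib, sub_mul]
    rfl
  have hG : ∀ m, Continuous fun y => cubic (trig N m y) := fun m => continuous_cubic.comp (hcont m)
  have hbessel := sum_norm_sq_fourierCoeffPi_le T ((hG m₁).sub (hG m₂))
  have hlip := integral_norm_sq_cubic_sub_le (hcont m₁) (hcont m₂) (hsup m₁ hm₁) (hsup m₂ hm₂)
    (by linarith [pi_pos] : -π ≤ π)
  simp_rw [hsub, integral_norm_sq_expSum] at hlip
  have hQ : 0 ≤ Q := (Finset.sum_nonneg fun _ _ => by positivity).trans hm₁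
  rw [Real.sq_sqrt (by positivity), mul_left_comm] at hlip
  simp_rw [← fourierCoeffPi_sub (hG m₁) (hG m₂)]
  exact le_of_mul_le_mul_left (hbessel.trans hlip) two_pi_pos

lemma sum_norm_sq_sub_le_of_isMidpointStep {s k b : ℝ} {N : ℕ} {uc y₁ y₂ : ℤ → ℂ}
    (h₁ : IsMidpointStep s k b N uc y₁) (h₂ : IsMidpointStep s k b N uc y₂) :
    ∑ l ∈ Finset.Icc (-(N:ℤ)) N, ‖y₁ l - y₂ l‖^2
      ≤ |k*b|^2 * ∑ l ∈ Finset.Icc (-(N:ℤ)) N,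
        ‖fourierCoeffPi (fun y => cubic (trig N (fun j => (y₁ j + uc j)/2) y)) l
          - fourierCoeffPi (fun y => cubic (trig N (fun j => (y₂ j + uc j)/2) y)) l‖^2 := by
  rw [Finset.mul_sum]
  refine Finset.sum_le_sum fun l hl => ?_
  rw [← mul_pow]
  exact pow_le_pow_left₀ (norm_nonneg _)
    (norm_sub_le_of_midpoint_eq (coeff_eq_of_trig_eq h₁ l hl) (coeff_eq_of_trig_eq h₂ l hl)) 2

lemma card_Icc_neg_natCast (N : ℕ) : ((Finset.Icc (-(N:ℤ)) N).card : ℝ) = 2*N + 1 := by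
  have hcard : (Finset.Icc (-(N:ℤ)) N).card = 2*N + 1 := by simp [Int.card_Icc]; omega
  exact_mod_cast hcard

lemma contraction_factor_le {k b R : ℝ} (hk : 0 ≤ k) {N : ℕ} (hN : 0 < N) :
    k * |b| * (3 * ((Finset.Icc (-(N:ℤ)) N).card * (R^2 / (2*π)))) / 2
      ≤ 3 * R^2 * k * N * |b| := by
  have hN1 : (1:ℝ) ≤ N := by exact_mod_cast hN
  have hsum : 2 * (N:ℝ) + 1 ≤ 4 * π * N := by nlinarith [pi_gt_three]
  rw [card_Icc_neg_natCast]
  calc _ = 3 * k * |b| * R^2 / (4*π) * (2*N + 1) := by field_simp; ring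
    _ ≤ 3 * k * |b| * R^2 / (4*π) * (4*π*N) := by gcongr
    _ = 3 * R^2 * k * N * |b| := by field_simp

lemma trig_eq_of_small_step {s k b R : ℝ} (hk : 0 < k) {N : ℕ} (hN : 0 < N) {uc y₁ y₂ : ℤ → ℂ}
    (hsmall : 3 * R^2 * k * N * |b| < 1)
    (h₁ : IsMidpointStep s k b N uc y₁) (h₂ : IsMidpointStep s k b N uc y₂)
    (hm₁ : ∑ j ∈ Finset.Icc (-(N:ℤ)) N, ‖(y₁ j + uc j)/2‖^2 ≤ R^2 / (2*π))
    (hm₂ : ∑ j ∈ Finset.Icc (-(N:ℤ)) N, ‖(y₂ j + uc j)/2‖^2 ≤ R^2 / (2*π)) :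
    ∀ x, trig N y₁ x = trig N y₂ x := by
  set T := Finset.Icc (-(N:ℤ)) N
  set D := ∑ l ∈ T, ‖y₁ l - y₂ l‖^2
  set θ := k * |b| * (3 * (T.card * (R^2 / (2*π)))) / 2
  have hmid : ∑ j ∈ T, ‖(y₁ j + uc j)/2 - (y₂ j + uc j)/2‖^2 = D / 4 := by
    rw [Finset.sum_div]
    refine Finset.sum_congr rfl fun j _ => ?_
    rw [← sub_div, add_sub_add_right_eq_sub, norm_div, Complex.norm_ofNat]
    ring
  have hcontract : D ≤ θ^2 * D := by
    have hlip := sum_norm_sq_fourierCoeffPi_cubic_sub_le N hm₁ hm₂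
    rw [hmid] at hlip
    calc D ≤ _ := sum_norm_sq_sub_le_of_isMidpointStep h₁ h₂
      _ ≤ |k*b|^2 * ((3 * (T.card * (R^2 / (2*π))))^2 * (D / 4)) := by gcongr
      _ = θ^2 * D := by rw [abs_mul, abs_of_pos hk]; ring
  have hθ : θ < 1 := (contraction_factor_le hk.le hN).trans_lt hsmall
  have hD : D = 0 := by
    have hθ0 : 0 ≤ θ := by positivity
    have hD0 : 0 ≤ D := by positivity
    have hθ1 : θ^2 < 1 := by nlinarith
    nlinarith [mul_nonneg (sub_nonneg.mpr hθ1.le) hD0]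
  have hcoeff : ∀ l ∈ T, y₁ l = y₂ l := fun l hl => by
    have := (Finset.sum_eq_zero_iff_of_nonneg fun j _ => by positivity).mp hD l hl
    simpa [sub_eq_zero] using this
  exact fun x => Finset.sum_congr rfl fun j hj => by rw [hcoeff j hj]

theorem imr_step_unique_general (s k b : ℝ) (hs1 : 0 < s)
    (hk : 0 < k) (N : ℕ) (uc y₁ y₂ : ℤ → ℂ) (R : ℝ)
    (hR : R = Real.sqrt (∫ x in (-π)..π, ‖trig N uc x‖^2))
    (hsmall : 3 * R^2 * k * (N:ℝ) * |b| < 1)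
    (h1 : ∀ x : ℝ, trig N y₁ x = trig N uc x +
      ((k*b : ℝ) : ℂ) * Fmap s N (fun j => (y₁ j + uc j)/2) x)
    (h2 : ∀ x : ℝ, trig N y₂ x = trig N uc x +
      ((k*b : ℝ) : ℂ) * Fmap s N (fun j => (y₂ j + uc j)/2) x)
    (hn1 : Real.sqrt (∫ x in (-π)..π, ‖trig N y₁ x‖^2) = R)
    (hn2 : Real.sqrt (∫ x in (-π)..π, ‖trig N y₂ x‖^2) = R) :
    ∀ x : ℝ, trig N y₁ x = trig N y₂ x := by
  rcases Nat.eq_zero_or_pos N with rfl | hN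
  · exact trig_eq_of_degree_zero hs1 h1 h2
  have hu := sum_norm_sq_eq_of_sqrt_integral_eq hR.symm
  have hmid : ∀ y : ℤ → ℂ, Real.sqrt (∫ x in (-π)..π, ‖trig N y x‖^2) = R →
      ∑ j ∈ Finset.Icc (-(N:ℤ)) N, ‖(y j + uc j)/2‖^2 ≤ R^2 / (2*π) := fun y hy => by
    have := sum_norm_sq_midpoint_le (Finset.Icc (-(N:ℤ)) N) y uc
    rwa [sum_norm_sq_eq_of_sqrt_integral_eq hy, hu, add_self_div_two] at this
  exact trig_eq_of_small_step hk hN hsmall h1 h2 (hmid y₁ hn1) (hmid y₂ hn2)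

/-- Uniqueness for the implicit midpoint system on `S_N` under the step-size
restriction `3R²kN|b| < 1`, among solutions with `‖Y‖ = ‖U‖`. -/
theorem imr_step_unique (s k b : ℝ) (hs1 : 0 < s) (hs2 : s ≤ 1)
    (hk : 0 < k) (hb : b ≠ 0) (N : ℕ) (uc y₁ y₂ : ℤ → ℂ) (R : ℝ)
    (hR : R = Real.sqrt (∫ x in (-π)..π, ‖trig N uc x‖^2))
    (hsmall : 3 * R^2 * k * (N:ℝ) * |b| < 1)
    (h1 : ∀ x : ℝ, trig N y₁ x = trig N uc x +
      ((k*b : ℝ) : ℂ) * Fmap s N (fun j => (y₁ j + uc j)/2) x)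
    (h2 : ∀ x : ℝ, trig N y₂ x = trig N uc x +
      ((k*b : ℝ) : ℂ) * Fmap s N (fun j => (y₂ j + uc j)/2) x)
    (hn1 : Real.sqrt (∫ x in (-π)..π, ‖trig N y₁ x‖^2) = R)
    (hn2 : Real.sqrt (∫ x in (-π)..π, ‖trig N y₂ x‖^2) = R) :
    ∀ x : ℝ, trig N y₁ x = trig N y₂ x :=
  imr_step_unique_general s k b hs1 hk N uc y₁ y₂ R hR hsmall h1 h2 hn1 hn2
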